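/- arXiv:1010.0077 — 5 statements merged into one kernel-verified Lean document; each statement's English description precedes it below -/
import Mathlib

section
/- Jacobi's triple product identity: for every real number t with 0 < t < 1 and every nonzero complex number z, the absolutely convergent sum and product satisfy ∑_{k∈ℤ} t^{k²/2} z^k = ∏_{n=1}^{∞} (1 + t^{n−1/2} z)(1 + t^{n−1/2} z^{−1})(1 − t^n). -/
/-!
Put `q = √t`. By the `q`-binomial theorem in base `q²`, evaluated at `x = q^(1-2N) z`, the finite
product `∏_{n<N} (1 + q^(2n+1) z)(1 + q^(2n+1) z⁻¹)` is the Laurent polynomial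
`∑_{|k| ≤ N} [2N, N+k]_{q²} q^(k²) z^k`. After multiplying by `(q²;q²)_N`, its coefficients
`(q²;q²)_N (q²;q²)_{2N} / ((q²;q²)_{N+k} (q²;q²)_{N-k})` tend to `1` and are bounded by
`(q²;q²)_∞⁻²`, so Tannery's theorem lets `N → ∞` term by term.
-/

open Finset Filter Topology Complex
open scoped Real

section QBinomial

variable {R : Type*} [CommRing R] (q : R)

/-- `(q;q)_n`. -/
def qPochhammer (n : ℕ) : R := ∏ j ∈ range n, (1 - q ^ (j + 1))

/-- The Gaussian binomial coefficient `[n, k]_q`. -/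
def qBinomial : ℕ → ℕ → R
  | _, 0 => 1
  | 0, _ + 1 => 0
  | n + 1, k + 1 => qBinomial n k + q ^ (k + 1) * qBinomial n (k + 1)

variable {q}

@[simp] lemma qPochhammer_zero : qPochhammer q 0 = 1 := prod_range_zero _

lemma qPochhammer_succ (n : ℕ) : qPochhammer q (n + 1) = qPochhammer q n * (1 - q ^ (n + 1)) :=
  prod_range_succ _ _

@[simp] lemma qBinomial_zero_right (n : ℕ) : qBinomial q n 0 = 1 := by cases n <;> rfl

lemma qBinomial_succ_succ (n k : ℕ) :
    qBinomial q (n + 1) (k + 1) = qBinomial q n k + q ^ (k + 1) * qBinomial q n (k + 1) := rfl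

lemma qBinomial_eq_zero_of_lt {n k : ℕ} (h : n < k) : qBinomial q n k = 0 := by
  induction n generalizing k with
  | zero => obtain ⟨k, rfl⟩ := Nat.exists_eq_add_of_lt h; rfl
  | succ n ih =>
    obtain ⟨k, rfl⟩ := Nat.exists_eq_add_of_le' (by omega : 1 ≤ k)
    rw [qBinomial_succ_succ, ih (by omega), ih (by omega), mul_zero, add_zero]

@[simp] lemma qBinomial_self (n : ℕ) : qBinomial q n n = 1 := by
  induction n with
  | zero => rfl
  | succ n ih =>
    rw [qBinomial_succ_succ, ih, qBinomial_eq_zero_of_lt n.lt_succ_self, mul_zero, add_zero]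

lemma qBinomial_mul_qPochhammer_mul_qPochhammer {n k : ℕ} (h : k ≤ n) :
    qBinomial q n k * qPochhammer q k * qPochhammer q (n - k) = qPochhammer q n := by
  induction n generalizing k with
  | zero => obtain rfl := Nat.le_zero.1 h; simp
  | succ n ih =>
    cases k with
    | zero => simp
    | succ k =>
      rcases (Nat.le_of_succ_le_succ h).eq_or_lt with rfl | hk
      · simp [qPochhammer_succ]
      obtain ⟨m, rfl⟩ := Nat.exists_eq_add_of_lt hk
      have h1 := ih hk.le
      have h2 := ih hk
      rw [show k + m + 1 - k = m + 1 by omega] at h1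
      rw [show k + m + 1 - (k + 1) = m by omega] at h2
      rw [show k + m + 1 + 1 - (k + 1) = m + 1 by omega, qBinomial_succ_succ]
      -- the two Pascal terms give `(q;q)_n (1 - q^(k+1))` and `(q;q)_n q^(k+1) (1 - q^(m+1))`
      linear_combination
        qBinomial q (k + m + 1) k * qPochhammer q (m + 1) * qPochhammer_succ (q := q) k +
        (1 - q ^ (k + 1)) * h1 + (1 - q ^ (m + 1)) * q ^ (k + 1) * h2 +
        q ^ (k + 1) * qBinomial q (k + m + 1) (k + 1) * qPochhammer q (k + 1) *
          qPochhammer_succ (q := q) m - qPochhammer_succ (q := q) (k + m + 1)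

lemma map_qBinomial {S : Type*} [CommRing S] (f : R →+* S) (n k : ℕ) :
    f (qBinomial q n k) = qBinomial (f q) n k := by
  induction n generalizing k with
  | zero => cases k <;> simp [qBinomial]
  | succ n ih => cases k <;> simp [qBinomial_succ_succ, ih]

theorem prod_one_add_pow_mul_eq_sum_qBinomial (x : R) (m : ℕ) :
    ∏ i ∈ range m, (1 + q ^ i * x) =
      ∑ r ∈ range (m + 1), q ^ r.choose 2 * qBinomial q m r * x ^ r := by
  induction m generalizing x with
  | zero => simp
  | succ m ih =>
    set f : ℕ → R := fun r => q ^ r.choose 2 * qBinomial q m r * (q * x) ^ r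
    have pascal (r : ℕ) :
        q ^ (r + 1).choose 2 * qBinomial q (m + 1) (r + 1) * x ^ (r + 1) = x * f r + f (r + 1) := by
      simp only [f, qBinomial_succ_succ, Nat.choose_succ_succ', Nat.choose_one_right]
      ring
    have hf : f (m + 1) = 0 := by simp [f, qBinomial_eq_zero_of_lt]
    have hf0 : f 0 = 1 := by simp [f]
    have htail : ∑ r ∈ range (m + 1), f (r + 1) + f 0 = ∑ r ∈ range (m + 1), f r := by
      rw [← sum_range_succ', sum_range_succ, hf, add_zero]
    have hshift (i : ℕ) : 1 + q ^ (i + 1) * x = 1 + q ^ i * (q * x) := by ring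
    -- split off the factor `1 + x`; the rest is the product of length `m` at `q x`
    rw [prod_range_succ', sum_range_succ', prod_congr rfl fun i _ => hshift i, ih]
    change (∑ r ∈ range (m + 1), f r) * _ = _
    simp only [pascal, sum_add_distrib, ← mul_sum, qBinomial_zero_right, pow_zero,
      Nat.choose_zero_succ]
    linear_combination hf0 - htail

end QBinomial

section Field

variable {K : Type*} [Field K] {q : K}

lemma prod_range_zpow_neg_odd_mul (hq : q ≠ 0) (z : K) (N : ℕ) :
    ∏ n ∈ range N, (q ^ (-(2 * n + 1) : ℤ) * z) = q ^ (-(N : ℤ) ^ 2) * z ^ N := by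
  induction N with
  | zero => simp
  | succ N ih =>
    rw [prod_range_succ, ih, show -((N + 1 : ℕ) : ℤ) ^ 2 = -(N : ℤ) ^ 2 + -(2 * N + 1) by
      push_cast; ring, zpow_add₀ hq, pow_succ]
    ring

/-- Reflecting `i ↦ N - 1 - i` on the first half turns `1 + q^(-(2i+1)) z` into
`q^(-(2i+1)) z (1 + q^(2i+1) z⁻¹)`. -/
lemma prod_range_two_mul_one_add_pow_mul (hq : q ≠ 0) {z : K} (hz : z ≠ 0) (N : ℕ) :
    ∏ i ∈ range (2 * N), (1 + (q ^ 2) ^ i * (q ^ (1 - 2 * (N : ℤ)) * z)) =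
      q ^ (-(N : ℤ) ^ 2) * z ^ N *
        ∏ n ∈ range N, ((1 + q ^ (2 * n + 1) * z) * (1 + q ^ (2 * n + 1) * z⁻¹)) := by
  have hshift (i : ℕ) :
      (q ^ 2) ^ i * (q ^ (1 - 2 * (N : ℤ)) * z) = q ^ (2 * (i : ℤ) + 1 - 2 * N) * z := by
    rw [← mul_assoc, ← pow_mul, ← zpow_natCast, ← zpow_add₀ hq]
    push_cast
    ring_nf
  have hlow (n : ℕ) (hn : n ∈ range N) :
      1 + (q ^ 2) ^ (N - 1 - n) * (q ^ (1 - 2 * (N : ℤ)) * z) =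
        q ^ (-(2 * n + 1) : ℤ) * z * (1 + q ^ (2 * n + 1) * z⁻¹) := by
    rw [mem_range] at hn
    rw [hshift, show 2 * ((N - 1 - n : ℕ) : ℤ) + 1 - 2 * N = -(2 * n + 1) by omega, zpow_neg,
      show (2 * n + 1 : ℤ) = ((2 * n + 1 : ℕ) : ℤ) by push_cast; ring, zpow_natCast]
    field_simp
    ring
  have hhigh (n : ℕ) :
      1 + (q ^ 2) ^ (N + n) * (q ^ (1 - 2 * (N : ℤ)) * z) = 1 + q ^ (2 * n + 1) * z := by
    rw [hshift, show 2 * ((N + n : ℕ) : ℤ) + 1 - 2 * N = ((2 * n + 1 : ℕ) : ℤ) by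
      push_cast; ring, zpow_natCast]
  rw [two_mul, prod_range_add, ← prod_range_reflect, prod_congr rfl hlow, prod_mul_distrib,
    prod_range_zpow_neg_odd_mul hq, prod_congr rfl fun n _ => hhigh n, prod_mul_distrib]
  ring

lemma sq_pow_choose_two_mul_zpow_mul_pow (hq : q ≠ 0) {z : K} (hz : z ≠ 0) (N r : ℕ) :
    (q ^ 2) ^ r.choose 2 * (q ^ (1 - 2 * (N : ℤ)) * z) ^ r =
      q ^ (-(N : ℤ) ^ 2) * z ^ N * (q ^ (((r : ℤ) - N) ^ 2) * z ^ ((r : ℤ) - N)) := by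
  have hchoose : ((r.choose 2 : ℕ) : ℤ) * 2 = r * (r - 1) := by
    qify
    rw [Nat.cast_choose_two]
    ring
  have hzr : z ^ r = z ^ N * z ^ ((r : ℤ) - N) := by
    rw [← zpow_natCast, ← zpow_natCast, ← zpow_add₀ hz]
    ring_nf
  have hqr : (q ^ 2) ^ r.choose 2 * (q ^ (1 - 2 * (N : ℤ))) ^ r =
      q ^ (-(N : ℤ) ^ 2) * q ^ (((r : ℤ) - N) ^ 2) := by
    rw [← pow_mul, ← zpow_natCast, ← zpow_natCast, ← zpow_mul, ← zpow_add₀ hq,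
      ← zpow_add₀ hq]
    congr 1
    push_cast
    linear_combination hchoose
  rw [mul_pow, hzr, ← mul_assoc, hqr]
  ring

/-- The `q`-binomial theorem in base `q²` at `x = q^(1-2N) z`. -/
theorem prod_range_jacobi_eq_sum_qBinomial (hq : q ≠ 0) {z : K} (hz : z ≠ 0) (N : ℕ) :
    ∏ n ∈ range N, ((1 + q ^ (2 * n + 1) * z) * (1 + q ^ (2 * n + 1) * z⁻¹)) =
      ∑ k ∈ Icc (-N : ℤ) N,
        qBinomial (q ^ 2) (2 * N) (N + k).toNat * q ^ (k ^ 2) * z ^ k := by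
  have hsum : ∑ r ∈ range (2 * N + 1),
      (q ^ 2) ^ r.choose 2 * qBinomial (q ^ 2) (2 * N) r * (q ^ (1 - 2 * (N : ℤ)) * z) ^ r =
      q ^ (-(N : ℤ) ^ 2) * z ^ N *
        ∑ k ∈ Icc (-N : ℤ) N,
          qBinomial (q ^ 2) (2 * N) (N + k).toNat * q ^ (k ^ 2) * z ^ k := by
    rw [mul_sum]
    refine sum_nbij' (fun r => (r : ℤ) - N) (fun k => (N + k).toNat) ?_ ?_ ?_ ?_ ?_ <;>
      simp only [mem_range, mem_Icc]
    · intro r hr; omega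
    · intro k hk; omega
    · intro r hr; omega
    · intro k hk; omega
    · intro r hr
      rw [show ((N : ℤ) + (r - N)).toNat = r by omega, mul_right_comm,
        sq_pow_choose_two_mul_zpow_mul_pow hq hz]
      ring
  rw [← mul_right_inj' (by positivity : q ^ (-(N : ℤ) ^ 2) * z ^ N ≠ 0), ← hsum,
    ← prod_range_two_mul_one_add_pow_mul hq hz, prod_one_add_pow_mul_eq_sum_qBinomial]

end Field

/-- `(q;q)_∞`. -/
noncomputable def qPochhammerInf (q : ℝ) : ℝ := ∏' n : ℕ, (1 - q ^ (n + 1))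

section Real

variable {q : ℝ}

lemma one_sub_pow_succ_nonneg (hq0 : 0 ≤ q) (hq1 : q ≤ 1) (n : ℕ) : 0 ≤ 1 - q ^ (n + 1) :=
  sub_nonneg.2 (pow_le_one₀ hq0 hq1)

lemma qPochhammer_nonneg (hq0 : 0 ≤ q) (hq1 : q ≤ 1) (n : ℕ) : 0 ≤ qPochhammer q n :=
  prod_nonneg fun j _ => one_sub_pow_succ_nonneg hq0 hq1 j

lemma qPochhammer_le_one (hq0 : 0 ≤ q) (hq1 : q ≤ 1) (n : ℕ) : qPochhammer q n ≤ 1 :=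
  prod_le_one (fun j _ => one_sub_pow_succ_nonneg hq0 hq1 j)
    fun _ _ => sub_le_self _ (pow_nonneg hq0 _)

lemma qPochhammer_pos (hq0 : 0 ≤ q) (hq1 : q < 1) (n : ℕ) : 0 < qPochhammer q n :=
  prod_pos fun j _ => sub_pos.2 (pow_lt_one₀ hq0 hq1 j.succ_ne_zero)

lemma qPochhammer_antitone (hq0 : 0 ≤ q) (hq1 : q ≤ 1) : Antitone (qPochhammer q) :=
  antitone_nat_of_succ_le fun n => by
    rw [qPochhammer_succ]
    exact mul_le_of_le_one_right (qPochhammer_nonneg hq0 hq1 n) (sub_le_self _ (pow_nonneg hq0 _))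

lemma summable_norm_neg_pow_succ (hq0 : 0 ≤ q) (hq1 : q < 1) :
    Summable fun n : ℕ => ‖-q ^ (n + 1)‖ := by
  simpa [norm_neg, abs_of_nonneg hq0, pow_succ] using
    (summable_geometric_of_lt_one hq0 hq1).mul_right q

lemma tendsto_qPochhammer (hq0 : 0 ≤ q) (hq1 : q < 1) :
    Tendsto (qPochhammer q) atTop (𝓝 (qPochhammerInf q)) := by
  have h := (multipliable_one_add_of_summable (summable_norm_neg_pow_succ hq0 hq1)).hasProd
  simp only [← sub_eq_add_neg] at h
  exact h.tendsto_prod_nat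

lemma qPochhammerInf_pos (hq0 : 0 ≤ q) (hq1 : q < 1) : 0 < qPochhammerInf q := by
  refine lt_of_le_of_ne (ge_of_tendsto' (tendsto_qPochhammer hq0 hq1)
    (qPochhammer_nonneg hq0 hq1.le)) (Ne.symm ?_)
  have h := tprod_one_add_ne_zero_of_summable (fun n => ?_) (summable_norm_neg_pow_succ hq0 hq1)
  · simpa only [qPochhammerInf, ← sub_eq_add_neg] using h
  · rw [← sub_eq_add_neg]
    exact (sub_pos.2 (pow_lt_one₀ hq0 hq1 n.succ_ne_zero)).ne'

lemma qPochhammerInf_le_qPochhammer (hq0 : 0 ≤ q) (hq1 : q < 1) (n : ℕ) :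
    qPochhammerInf q ≤ qPochhammer q n :=
  (qPochhammer_antitone hq0 hq1.le).le_of_tendsto (tendsto_qPochhammer hq0 hq1) n

lemma qBinomial_nonneg (hq0 : 0 ≤ q) (n k : ℕ) : 0 ≤ qBinomial q n k := by
  induction n generalizing k with
  | zero => cases k <;> simp [qBinomial]
  | succ n ih =>
    cases k with
    | zero => simp [qBinomial]
    | succ k => rw [qBinomial_succ_succ]; have := ih k; have := ih (k + 1); positivity

lemma qBinomial_le_inv_qPochhammerInf_sq (hq0 : 0 ≤ q) (hq1 : q < 1) (n k : ℕ) :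
    qBinomial q n k ≤ (qPochhammerInf q ^ 2)⁻¹ := by
  have hL := qPochhammerInf_pos hq0 hq1
  rcases lt_or_ge n k with h | h
  · rw [qBinomial_eq_zero_of_lt h]; positivity
  rw [← one_div, le_div_iff₀ (by positivity)]
  calc qBinomial q n k * qPochhammerInf q ^ 2
      ≤ qBinomial q n k * (qPochhammer q k * qPochhammer q (n - k)) := by
        rw [sq]
        gcongr
        · exact qBinomial_nonneg hq0 n k
        · exact qPochhammer_nonneg hq0 hq1.le k
        · exact qPochhammerInf_le_qPochhammer hq0 hq1 k
        · exact qPochhammerInf_le_qPochhammer hq0 hq1 (n - k)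
    _ = qPochhammer q n := by rw [← mul_assoc, qBinomial_mul_qPochhammer_mul_qPochhammer h]
    _ ≤ 1 := qPochhammer_le_one hq0 hq1.le n

lemma tendsto_qPochhammer_mul_qBinomial (hq0 : 0 ≤ q) (hq1 : q < 1) (k : ℤ) :
    Tendsto (fun N : ℕ => qPochhammer q N * qBinomial q (2 * N) (N + k).toNat)
      atTop (𝓝 1) := by
  have hL := (qPochhammerInf_pos hq0 hq1).ne'
  have hP := tendsto_qPochhammer hq0 hq1
  have hshift (a : ℤ) : Tendsto (fun N : ℕ => (N + a).toNat) atTop atTop :=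
    tendsto_atTop_atTop.2 fun b => ⟨b + a.natAbs, fun N hN => by omega⟩
  have htwo : Tendsto (fun N : ℕ => 2 * N) atTop atTop :=
    tendsto_atTop_atTop.2 fun b => ⟨b, fun N hN => by omega⟩
  have hlim := (hP.mul (hP.comp htwo)).div ((hP.comp (hshift k)).mul (hP.comp (hshift (-k))))
    (mul_ne_zero hL hL)
  rw [div_self (mul_ne_zero hL hL)] at hlim
  -- for `N ≥ |k|` the sequence is `(q;q)_N (q;q)_{2N} / ((q;q)_{N+k} (q;q)_{N-k})`
  refine hlim.congr' ((eventually_ge_atTop k.natAbs).mono fun N hN => ?_)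
  have h := qBinomial_mul_qPochhammer_mul_qPochhammer (q := q) (n := 2 * N) (k := (N + k).toNat)
    (by omega)
  rw [show 2 * N - (N + k).toNat = (N + -k).toNat by omega] at h
  have := qPochhammer_pos hq0 hq1 (N + k).toNat
  have := qPochhammer_pos hq0 hq1 (N + -k).toNat
  simp only [Pi.div_apply, Function.comp_apply, ← h]
  field_simp

end Real

lemma zpow_sq_mul_zpow_eq_jacobiTheta₂_term {q : ℝ} (hq : 0 < q) {z : ℂ} (hz : z ≠ 0)
    (k : ℤ) :
    (q : ℂ) ^ (k ^ 2) * z ^ k =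
      jacobiTheta₂_term k (log z / (2 * π * I)) (Real.log q / (π * I)) := by
  have hexp :
      2 * π * I * k * (log z / (2 * π * I)) + π * I * (k : ℂ) ^ 2 * (Real.log q / (π * I)) =
      ((k ^ 2 : ℤ) : ℂ) * (Real.log q : ℂ) + k * log z := by
    field_simp
    push_cast
    ring
  rw [jacobiTheta₂_term, hexp, exp_add, exp_int_mul, exp_int_mul, exp_log hz, ← ofReal_exp,
    Real.exp_log hq]

lemma summable_norm_zpow_sq_mul_zpow {q : ℝ} (hq0 : 0 < q) (hq1 : q < 1) {z : ℂ}
    (hz : z ≠ 0) :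
    Summable fun k : ℤ => ‖(q : ℂ) ^ (k ^ 2) * z ^ k‖ := by
  simp_rw [zpow_sq_mul_zpow_eq_jacobiTheta₂_term hq0 hz]
  refine summable_norm_iff.2 ((summable_jacobiTheta₂_term_iff _ _).2 ?_)
  rw [div_mul_eq_div_div, ← ofReal_div, div_I, neg_im, mul_I_im, ofReal_re, neg_pos]
  exact div_neg_of_neg_of_pos (Real.log_neg hq0 hq1) Real.pi_pos

lemma multipliable_one_add_pow_mul {q : ℂ} (hq : ‖q‖ < 1) (a : ℕ) (c : ℂ) :
    Multipliable fun n : ℕ => 1 + q ^ (2 * n + a) * c := by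
  have hq2 : ‖q‖ ^ 2 < 1 := pow_lt_one₀ (norm_nonneg q) hq two_ne_zero
  refine multipliable_one_add_of_summable ?_
  refine ((summable_geometric_of_lt_one (by positivity) hq2).mul_right
    (‖q‖ ^ a * ‖c‖)).congr fun n => ?_
  rw [norm_mul, norm_pow, pow_add, pow_mul]
  ring

lemma prod_range_jacobiTriple_eq_tsum_indicator {q : ℝ} (hq : q ≠ 0) {z : ℂ} (hz : z ≠ 0)
    (N : ℕ) :
    ∏ n ∈ range N, ((1 + (q : ℂ) ^ (2 * n + 1) * z) * (1 + (q : ℂ) ^ (2 * n + 1) * z⁻¹) *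
      (1 - (q : ℂ) ^ (2 * n + 2))) =
      ∑' k : ℤ, (Set.Icc (-N : ℤ) N).indicator (fun k =>
        ((qPochhammer (q ^ 2) N * qBinomial (q ^ 2) (2 * N) (N + k).toNat : ℝ) : ℂ) *
          ((q : ℂ) ^ (k ^ 2) * z ^ k)) k := by
  have hP : ∏ n ∈ range N, (1 - (q : ℂ) ^ (2 * n + 2)) = qPochhammer (q ^ 2) N := by
    simp only [qPochhammer, ofReal_prod, ofReal_sub, ofReal_one, ofReal_pow, ← pow_mul]
    rfl
  have hG (n r : ℕ) : ((qBinomial (q ^ 2) n r : ℝ) : ℂ) = qBinomial ((q : ℂ) ^ 2) n r := by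
    rw [← ofReal_pow, ← ofRealHom_eq_coe, ← ofRealHom_eq_coe, map_qBinomial]
  rw [← coe_Icc, ← sum_eq_tsum_indicator, prod_mul_distrib, hP,
    prod_range_jacobi_eq_sum_qBinomial (ofReal_ne_zero.2 hq) hz, sum_mul]
  refine sum_congr rfl fun k _ => ?_
  simp only [ofReal_mul, hG]
  ring

theorem tendsto_prod_range_jacobiTriple {q : ℝ} (hq0 : 0 < q) (hq1 : q < 1) {z : ℂ}
    (hz : z ≠ 0) :
    Tendsto (fun N => ∏ n ∈ range N, ((1 + (q : ℂ) ^ (2 * n + 1) * z) *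
      (1 + (q : ℂ) ^ (2 * n + 1) * z⁻¹) * (1 - (q : ℂ) ^ (2 * n + 2)))) atTop
      (𝓝 (∑' k : ℤ, (q : ℂ) ^ (k ^ 2) * z ^ k)) := by
  have hQ0 : 0 ≤ q ^ 2 := sq_nonneg q
  have hQ1 : q ^ 2 < 1 := pow_lt_one₀ hq0.le hq1 two_ne_zero
  simp_rw [prod_range_jacobiTriple_eq_tsum_indicator hq0.ne' hz]
  refine tendsto_tsum_of_dominated_convergence
    (bound := fun k => (qPochhammerInf (q ^ 2) ^ 2)⁻¹ * ‖(q : ℂ) ^ (k ^ 2) * z ^ k‖)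
    ((summable_norm_zpow_sq_mul_zpow hq0 hq1 hz).mul_left _) (fun k => ?_)
    (Eventually.of_forall fun N k => ?_)
  · have h := ((continuous_ofReal.tendsto 1).comp
      (tendsto_qPochhammer_mul_qBinomial hQ0 hQ1 k)).mul_const ((q : ℂ) ^ (k ^ 2) * z ^ k)
    rw [ofReal_one, one_mul] at h
    refine h.congr' ((eventually_ge_atTop k.natAbs).mono fun N hN => ?_)
    have hk : k ∈ Set.Icc (-N : ℤ) N := ⟨by omega, by omega⟩
    simp only [Function.comp_apply, Set.indicator_of_mem hk]
  · refine (norm_indicator_le_norm_self _ _).trans ?_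
    have hG := qBinomial_nonneg hQ0 (2 * N) (N + k).toNat
    rw [norm_mul, norm_real, Real.norm_of_nonneg (mul_nonneg (qPochhammer_pos hQ0 hQ1 N).le hG)]
    gcongr
    exact (mul_le_of_le_one_left hG (qPochhammer_le_one hQ0 hQ1.le N)).trans
      (qBinomial_le_inv_qPochhammerInf_sq hQ0 hQ1 _ _)

theorem hasProd_jacobiTriple {q : ℝ} (hq0 : 0 < q) (hq1 : q < 1) {z : ℂ} (hz : z ≠ 0) :
    HasProd (fun n : ℕ => (1 + (q : ℂ) ^ (2 * n + 1) * z) *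
      (1 + (q : ℂ) ^ (2 * n + 1) * z⁻¹) * (1 - (q : ℂ) ^ (2 * n + 2)))
      (∑' k : ℤ, (q : ℂ) ^ (k ^ 2) * z ^ k) := by
  have hq : ‖(q : ℂ)‖ < 1 := by rwa [norm_real, Real.norm_of_nonneg hq0.le]
  have hmult : Multipliable fun n : ℕ => (1 + (q : ℂ) ^ (2 * n + 1) * z) *
      (1 + (q : ℂ) ^ (2 * n + 1) * z⁻¹) * (1 - (q : ℂ) ^ (2 * n + 2)) := by
    simpa [← sub_eq_add_neg] using ((multipliable_one_add_pow_mul hq 1 z).mul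
      (multipliable_one_add_pow_mul hq 1 z⁻¹)).mul (multipliable_one_add_pow_mul hq 2 (-1))
  rw [tendsto_nhds_unique (tendsto_prod_range_jacobiTriple hq0 hq1 hz)
    hmult.hasProd.tendsto_prod_nat]
  exact hmult.hasProd

/-- Jacobi's triple product identity: for `0 < t < 1` real and `z ≠ 0` complex,
`∑_{k ∈ ℤ} t^(k²/2) z^k = ∏_{n ≥ 1} (1 + t^(n-1/2) z)(1 + t^(n-1/2) z⁻¹)(1 - t^n)`,
the series converging absolutely and the product being (absolutely) convergent. -/
theorem jacobi_triple_product (t : ℝ) (ht0 : 0 < t) (ht1 : t < 1) (z : ℂ) (hz : z ≠ 0) :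
    Summable (fun k : ℤ => ‖((t ^ ((k : ℝ) ^ 2 / 2) : ℝ) : ℂ) * z ^ k‖) ∧
    Multipliable (fun n : ℕ =>
      (1 + ((t ^ (((n : ℝ) + 1) - 1 / 2) : ℝ) : ℂ) * z) *
      (1 + ((t ^ (((n : ℝ) + 1) - 1 / 2) : ℝ) : ℂ) * z⁻¹) *
      (1 - ((t ^ ((n : ℝ) + 1) : ℝ) : ℂ))) ∧
    ∑' k : ℤ, ((t ^ ((k : ℝ) ^ 2 / 2) : ℝ) : ℂ) * z ^ k =
      ∏' n : ℕ,
        (1 + ((t ^ (((n : ℝ) + 1) - 1 / 2) : ℝ) : ℂ) * z) *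
        (1 + ((t ^ (((n : ℝ) + 1) - 1 / 2) : ℝ) : ℂ) * z⁻¹) *
        (1 - ((t ^ ((n : ℝ) + 1) : ℝ) : ℂ)) := by
  obtain ⟨q, hq0, hq1, rfl⟩ : ∃ q : ℝ, 0 < q ∧ q < 1 ∧ t = q ^ 2 :=
    ⟨√t, Real.sqrt_pos.2 ht0, (Real.sqrt_lt' one_pos).2 (by rwa [one_pow]),
      (Real.sq_sqrt ht0.le).symm⟩
  have hpow (x : ℝ) (m : ℤ) (hm : 2 * x = m) : (((q ^ 2) ^ x : ℝ) : ℂ) = (q : ℂ) ^ m := by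
    rw [← Real.rpow_natCast_mul hq0.le, Nat.cast_ofNat, hm, Real.rpow_intCast, ofReal_zpow]
  have hθ (k : ℤ) : (((q ^ 2) ^ ((k : ℝ) ^ 2 / 2) : ℝ) : ℂ) = (q : ℂ) ^ (k ^ 2) :=
    hpow _ _ (by push_cast; ring)
  have hodd (n : ℕ) :
      (((q ^ 2) ^ (((n : ℝ) + 1) - 1 / 2) : ℝ) : ℂ) = (q : ℂ) ^ (2 * n + 1) := by
    rw [hpow _ (2 * n + 1 : ℕ) (by push_cast; ring), zpow_natCast]
  have heven (n : ℕ) : (((q ^ 2) ^ ((n : ℝ) + 1) : ℝ) : ℂ) = (q : ℂ) ^ (2 * n + 2) := by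
    rw [hpow _ (2 * n + 2 : ℕ) (by push_cast; ring), zpow_natCast]
  simp only [hθ, hodd, heven]
  have h := hasProd_jacobiTriple hq0 hq1 hz
  exact ⟨summable_norm_zpow_sq_mul_zpow hq0 hq1 hz, h.multipliable, h.tprod_eq.symm⟩
end

section
/- Theta function product formula: let m be a positive integer and p an integer. For all real t with 0 < t < 1 and real z > 0, θ(t,z) · θ_{p,m}(t,z) = ∑_{q} ( ∑_{n∈ℤ} t^{α^m_{p,q}(n)} ) · θ_{q,m+2}(t,z), where the outer sum runs over integers q with 0 ≤ q < 2(m+2) and q ≡ p (mod 2), and all series converge absolutely. -/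
open scoped BigOperators

/-- `θ(t,z) = ∑_{k ∈ ℤ} t^(k²/2) z^k` for real `t ∈ (0,1)`, `z > 0`. -/
noncomputable def theta (t z : ℝ) : ℝ :=
  ∑' k : ℤ, t ^ ((k : ℝ) ^ 2 / 2) * z ^ (k : ℤ)

/-- `θ_{n,m}(t,z) = ∑_{k ∈ n/(2m) + ℤ} t^(m k²) z^(m k)`, parametrized by `k = n/(2m) + j`. -/
noncomputable def thetaNM (n : ℤ) (m : ℕ) (t z : ℝ) : ℝ :=
  ∑' j : ℤ, t ^ ((m : ℝ) * ((n : ℝ) / (2 * (m : ℝ)) + (j : ℝ)) ^ 2) *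
    z ^ ((m : ℝ) * ((n : ℝ) / (2 * (m : ℝ)) + (j : ℝ)))

/-- `α^m_{p,q}(n) = (2m(m+2)n − (m+2)p + mq)² / (8m(m+2))`. -/
noncomputable def alphaPQ (m : ℝ) (p q n : ℤ) : ℝ :=
  (2 * m * (m + 2) * (n : ℝ) - (m + 2) * (p : ℝ) + m * (q : ℝ)) ^ 2 / (8 * m * (m + 2))

/-!
Multiplying out, `θ(t,z) θ_{p,m}(t,z)` is a double series over `(k, j) ∈ ℤ²` with general term
`t^(k²/2 + m l²) z^(k + m l)`, `l = p/(2m) + j`. Completing the square,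
`k²/2 + m l² = m (k - 2l)² / (2(m+2)) + (m+2) u²` with `u = (k + m l)/(m+2)`.
Sort the pairs by the residue `q` of `2(k + m l)` modulo `2(m+2)`; writing `q = p + 2d`, the class
of `q` is parametrized bijectively by `(n, j') ∈ ℤ²` through `k = d + 2j' + mn`, `j = j' - n`, and
there `u = q/(2(m+2)) + j'` and `m (k - 2l)² / (2(m+2)) = α^m_{p,q}(n)`. So the class sums to
`(∑ₙ t^α^m_{p,q}(n)) · θ_{q,m+2}(t,z)`; absolute convergence justifies the rearrangement.
-/

open Real

theorem hasSum_of_parametrized_fibers {ι β γ M : Type*} [AddCommMonoid M] [TopologicalSpace M]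
    [ContinuousAdd M] {f : β → M} {s : Finset ι} {c : β → ι} (hc : ∀ b, c b ∈ s) {φ : ι → γ → β}
    (hφ : ∀ i ∈ s, Function.Injective (φ i)) (hrange : ∀ i ∈ s, Set.range (φ i) = c ⁻¹' {i})
    {a : ι → M} (ha : ∀ i ∈ s, HasSum (f ∘ φ i) (a i)) : HasSum f (∑ i ∈ s, a i) := by
  have h := hasSum_sum_disjoint s (Set.pairwiseDisjoint_fiber c s) fun i hi => by
    rw [← hrange i hi]
    exact (hφ i hi).hasSum_range_iff.2 (ha i hi)
  have hcover : c ⁻¹' s = Set.univ := Set.eq_univ_of_forall hc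
  rwa [Finset.set_biUnion_preimage_singleton, hcover, hasSum_subtype_iff_indicator,
    Set.indicator_univ] at h

theorem summable_exp_quadratic {a : ℝ} (ha : a < 0) (b c : ℝ) :
    Summable fun k : ℤ => exp (a * k ^ 2 + b * k + c) := by
  have h := ((summable_jacobiTheta₂_term_iff ((-b / (2 * π) : ℝ) * Complex.I)
    ((-a / π : ℝ) * Complex.I)).2
    (by simpa using div_pos (neg_pos.2 ha) pi_pos)).norm.mul_right (exp c)
  refine h.congr fun k => ?_
  rw [norm_jacobiTheta₂_term, ← exp_add]
  congr 1
  simp only [Complex.mul_I_im, Complex.ofReal_re]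
  field_simp
  ring

theorem summable_rpow_mul_rpow_quadratic {t z : ℝ} (ht0 : 0 < t) (ht1 : t < 1) (hz : 0 < z)
    {A : ℝ} (hA : 0 < A) (B C D E : ℝ) :
    Summable fun k : ℤ => t ^ (A * k ^ 2 + B * k + C) * z ^ (D * k + E) := by
  have hlog : log t < 0 := log_neg ht0 ht1
  refine (summable_exp_quadratic (mul_neg_of_pos_of_neg hA hlog) (B * log t + D * log z)
    (C * log t + E * log z)).congr fun k => ?_
  rw [rpow_def_of_pos ht0, rpow_def_of_pos hz, ← exp_add]
  ring_nf

noncomputable def thetaTerm (t z : ℝ) (k : ℤ) : ℝ :=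
  t ^ ((k : ℝ) ^ 2 / 2) * z ^ k

noncomputable def thetaNMTerm (n : ℤ) (M t z : ℝ) (j : ℤ) : ℝ :=
  t ^ (M * (n / (2 * M) + j) ^ 2) * z ^ (M * (n / (2 * M) + j))

section Summability

variable {t z : ℝ}

theorem summable_thetaTerm (ht0 : 0 < t) (ht1 : t < 1) (hz : 0 < z) :
    Summable (thetaTerm t z) := by
  refine (summable_rpow_mul_rpow_quadratic ht0 ht1 hz one_half_pos 0 0 1 0).congr fun k => ?_
  rw [thetaTerm, ← rpow_intCast]
  ring_nf

theorem summable_thetaNMTerm (ht0 : 0 < t) (ht1 : t < 1) (hz : 0 < z) {M : ℝ} (hM : 0 < M)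
    (n : ℤ) : Summable (thetaNMTerm n M t z) := by
  refine (summable_rpow_mul_rpow_quadratic ht0 ht1 hz hM n (n ^ 2 / (4 * M)) M (n / 2)).congr
    fun j => ?_
  rw [thetaNMTerm]
  congr 2 <;> field_simp <;> ring

theorem summable_rpow_alphaPQ (ht0 : 0 < t) (ht1 : t < 1) {m : ℝ} (hm : 0 < m * (m + 2))
    (p q : ℤ) :
    Summable fun n : ℤ => t ^ alphaPQ m p q n := by
  have hm0 : m ≠ 0 := left_ne_zero_of_mul hm.ne'
  have hm2 : m + 2 ≠ 0 := right_ne_zero_of_mul hm.ne'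
  refine (summable_rpow_mul_rpow_quadratic ht0 ht1 one_pos (half_pos hm)
    ((m * q - (m + 2) * p) / 2) ((m * q - (m + 2) * p) ^ 2 / (8 * m * (m + 2))) 0 0).congr
    fun n => ?_
  rw [zero_mul, add_zero, one_rpow, mul_one, alphaPQ]
  congr 1
  field_simp
  ring

end Summability

namespace ThetaProduct

section

variable (m : ℕ) (p : ℤ)

def residue (x : ℤ × ℤ) : ℤ :=
  (2 * (x.1 + m * x.2) + p) % (2 * (m + 2))

def fiberMap (q : ℤ) (y : ℤ × ℤ) : ℤ × ℤ :=
  ((q - p) / 2 + 2 * y.2 + m * y.1, y.2 - y.1)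

theorem residue_mem (x : ℤ × ℤ) :
    residue m p x ∈ (Finset.Ico (0 : ℤ) (2 * ((m : ℤ) + 2))).filter (fun q => q % 2 = p % 2) := by
  have hL : (0 : ℤ) < 2 * (m + 2) := by positivity
  simp only [Finset.mem_filter, Finset.mem_Ico, residue]
  refine ⟨⟨Int.emod_nonneg _ hL.ne', Int.emod_lt_of_pos _ hL⟩, ?_⟩
  rw [Int.emod_emod_of_dvd _ (dvd_mul_right 2 _)]
  omega

theorem fiberMap_injective (q : ℤ) : Function.Injective (fiberMap m p q) := by
  rintro ⟨n, j⟩ ⟨n', j'⟩ h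
  simp only [fiberMap, Prod.mk.injEq] at h
  obtain ⟨h1, h2⟩ := h
  have hn : ((m : ℤ) + 2) * n = (m + 2) * n' := by linear_combination h1 - 2 * h2
  have hn' : n = n' := mul_left_cancel₀ (by positivity) hn
  exact Prod.ext hn' (by omega)

theorem range_fiberMap {q : ℤ}
    (hq : q ∈ (Finset.Ico (0 : ℤ) (2 * ((m : ℤ) + 2))).filter (fun q => q % 2 = p % 2)) :
    Set.range (fiberMap m p q) = residue m p ⁻¹' {q} := by
  simp only [Finset.mem_filter, Finset.mem_Ico] at hq
  obtain ⟨⟨hq0, hqL⟩, hqp⟩ := hq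
  have hd : q = p + 2 * ((q - p) / 2) := by omega
  ext ⟨k, j⟩
  simp only [Set.mem_range, Set.mem_preimage, Set.mem_singleton_iff, residue, fiberMap,
    Prod.exists, Prod.mk.injEq]
  constructor
  · rintro ⟨n, j', rfl, rfl⟩
    have h : 2 * ((q - p) / 2 + 2 * j' + m * n + m * (j' - n)) + p = q + 2 * (m + 2) * j' := by
      linear_combination -hd
    rw [h, Int.add_mul_emod_self_left, Int.emod_eq_of_lt hq0 hqL]
  · intro h
    set j' := (2 * (k + m * j) + p) / (2 * (m + 2))
    have hdiv := Int.mul_ediv_add_emod (2 * (k + m * j) + p) (2 * (m + 2))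
    rw [h] at hdiv
    refine ⟨j' - j, j', ?_, by ring⟩
    linarith

end

theorem thetaTerm_mul_thetaNMTerm_fiberMap {t z : ℝ} (ht0 : 0 < t) (hz : 0 < z) {m : ℕ}
    (hm : m ≠ 0) {p q : ℤ} (hq : q % 2 = p % 2) (y : ℤ × ℤ) :
    thetaTerm t z (fiberMap m p q y).1 * thetaNMTerm p m t z (fiberMap m p q y).2 =
      t ^ alphaPQ m p q y.1 * thetaNMTerm q (m + 2) t z y.2 := by
  obtain ⟨n, j⟩ := y
  obtain ⟨d, rfl⟩ : ∃ d, q = p + 2 * d := ⟨(q - p) / 2, by omega⟩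
  have hm0 : (m : ℝ) ≠ 0 := Nat.cast_ne_zero.2 hm
  have hm2 : (m : ℝ) + 2 ≠ 0 := by positivity
  have hd : (p + 2 * d - p) / 2 = d := by omega
  simp only [thetaTerm, thetaNMTerm, fiberMap, hd, ← rpow_intCast z]
  push_cast
  have ht_exp : ((d : ℝ) + 2 * j + m * n) ^ 2 / 2 + m * (p / (2 * m) + (j - n)) ^ 2 =
      alphaPQ m p (p + 2 * d) n + (m + 2) * (((p : ℝ) + 2 * d) / (2 * (m + 2)) + j) ^ 2 := by
    rw [alphaPQ]
    push_cast
    field_simp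
    ring
  have hz_exp : ((d : ℝ) + 2 * j + m * n) + m * (p / (2 * m) + (j - n)) =
      (m + 2) * (((p : ℝ) + 2 * d) / (2 * (m + 2)) + j) := by
    field_simp
    ring
  have hcombine : ∀ a b c e : ℝ, t ^ a * z ^ b * (t ^ c * z ^ e) = t ^ (a + c) * z ^ (b + e) := by
    intro a b c e
    rw [rpow_add ht0, rpow_add hz]
    ring
  rw [hcombine, ht_exp, hz_exp, rpow_add ht0, mul_assoc]

end ThetaProduct

/-- Theta function product formula:
`θ(t,z) · θ_{p,m}(t,z) = ∑_{0 ≤ q < 2(m+2), q ≡ p [2]} (∑_{n ∈ ℤ} t^(α^m_{p,q}(n))) · θ_{q,m+2}(t,z)`,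
all the series involved converging absolutely. -/
theorem theta_product_formula (m : ℕ) (hm : 1 ≤ m) (p : ℤ) (t z : ℝ)
    (ht0 : 0 < t) (ht1 : t < 1) (hz : 0 < z) :
    Summable (fun k : ℤ => t ^ ((k : ℝ) ^ 2 / 2) * z ^ (k : ℤ)) ∧
    Summable (fun j : ℤ => t ^ ((m : ℝ) * ((p : ℝ) / (2 * (m : ℝ)) + (j : ℝ)) ^ 2) *
      z ^ ((m : ℝ) * ((p : ℝ) / (2 * (m : ℝ)) + (j : ℝ)))) ∧
    (∀ q : ℤ, Summable (fun n : ℤ => t ^ alphaPQ (m : ℝ) p q n)) ∧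
    (∀ q : ℤ, Summable (fun j : ℤ =>
      t ^ (((m : ℝ) + 2) * ((q : ℝ) / (2 * ((m : ℝ) + 2)) + (j : ℝ)) ^ 2) *
      z ^ (((m : ℝ) + 2) * ((q : ℝ) / (2 * ((m : ℝ) + 2)) + (j : ℝ))))) ∧
    theta t z * thetaNM p m t z =
      ∑ q ∈ (Finset.Ico (0 : ℤ) (2 * ((m : ℤ) + 2))).filter (fun q => q % 2 = p % 2),
        (∑' n : ℤ, t ^ alphaPQ (m : ℝ) p q n) * thetaNM q (m + 2) t z := by
  have hm0 : (0 : ℝ) < m := by exact_mod_cast hm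
  have hθ := summable_thetaTerm ht0 ht1 hz
  have hθp := summable_thetaNMTerm ht0 ht1 hz hm0 p
  have hα := summable_rpow_alphaPQ ht0 ht1 (by positivity : (0 : ℝ) < m * (m + 2)) p
  have hθq := summable_thetaNMTerm ht0 ht1 hz (by positivity : (0 : ℝ) < m + 2)
  refine ⟨hθ, hθp, hα, hθq, hθ.hasSum.mul_eq hθp.hasSum ?_⟩
  refine hasSum_of_parametrized_fibers (ThetaProduct.residue_mem m p)
    (fun q _ => ThetaProduct.fiberMap_injective m p q)
    (fun q hq => ThetaProduct.range_fiberMap m p hq) fun q hq => ?_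
  have hθq' : thetaNM q (m + 2) t z = ∑' j, thetaNMTerm q (m + 2) t z j := by
    simp only [thetaNM, thetaNMTerm, Nat.cast_add, Nat.cast_ofNat]
  rw [hθq', Function.comp_def]
  simp only [ThetaProduct.thetaTerm_mul_thetaNMTerm_fiberMap ht0 hz (Nat.one_le_iff_ne_zero.1 hm)
    (Finset.mem_filter.1 hq).2]
  exact (hα q).hasSum.mul (hθq q).hasSum
    (summable_mul_of_summable_norm (hα q).norm (hθq q).norm)
end

section
/- Let d, k be natural numbers, let A be a d × d matrix with entries in the polynomial ring ℂ[t], and let t₀ ∈ ℂ. If the kernel of the evaluated matrix A(t₀) (a d × d complex matrix) has dimension at least k as a ℂ-vector space, then (t − t₀)^k divides det A in ℂ[t]. -/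
/-!
Pick an invertible complex matrix `P` having `k` columns in `ker A(t₀)`. The corresponding `k`
columns of `A · P` vanish at `t₀`, so each of their entries is divisible by `t - t₀`, and every
term of the Leibniz expansion of `det (A · P)` contains one entry from each of these columns.
Hence `(t - t₀)^k ∣ det (A · P) = det A · det P`, and `det P` is a unit of `ℂ[t]`.
-/

open Polynomial Matrix

theorem Matrix.pow_card_dvd_det_of_dvd_cols {R m n : Type*} [CommRing R] [Fintype m]
    [Fintype n] [DecidableEq n] (B : Matrix n n R) (p : R) (c : m ↪ n)
    (h : ∀ i j, p ∣ B i (c j)) : p ^ Fintype.card m ∣ B.det := by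
  rw [det_apply]
  refine Finset.dvd_sum fun σ _ => ?_
  rw [Units.smul_def, zsmul_eq_mul]
  refine Dvd.dvd.mul_left ?_ _
  calc p ^ Fintype.card m = ∏ j, p := (Finset.prod_const p).symm
    _ ∣ ∏ j, B (σ (c j)) (c j) := Finset.prod_dvd_prod_of_dvd _ _ fun j _ => h _ _
    _ = ∏ i ∈ Finset.univ.map c, B (σ i) i := (Finset.prod_map _ c fun i => B (σ i) i).symm
    _ ∣ ∏ i, B (σ i) i := Finset.prod_dvd_prod_of_subset _ _ _ (Finset.subset_univ _)

theorem Module.Basis.sumExtend_apply_inl {ι V K : Type*} [Field K] [AddCommGroup V] [Module K V]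
    {v : ι → V} (hv : LinearIndependent K v) (i : ι) : sumExtend hv (Sum.inl i) = v i := by
  simp only [sumExtend, reindex_apply, Trans.trans]
  exact extend_apply_self _ _

theorem LinearIndependent.exists_basis_comp_eq {K V ι n : Type*} [Field K]
    [AddCommGroup V] [Module K V] [Module.Finite K V] [Fintype n] {v : ι → V}
    (hv : LinearIndependent K v) (hn : Module.finrank K V = Fintype.card n) :
    ∃ (b : Module.Basis n K V) (c : ι ↪ n), ∀ j, b (c j) = v j := by
  let b := Module.Basis.sumExtend hv
  have : Fintype (ι ⊕ Module.Basis.sumExtendIndex hv) := FiniteDimensional.fintypeBasisIndex b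
  have e : (ι ⊕ Module.Basis.sumExtendIndex hv) ≃ n :=
    Fintype.equivOfCardEq (by rw [← Module.finrank_eq_card_basis b, hn])
  refine ⟨b.reindex e, ⟨e ∘ Sum.inl, e.injective.comp Sum.inl_injective⟩, fun j => ?_⟩
  simp [b, Module.Basis.sumExtend_apply_inl]

/-- If `A` is a `d × d` matrix of polynomials and the kernel of the evaluated matrix
`A(t₀)` has dimension at least `k`, then `(t − t₀)^k` divides `det A` in `ℂ[t]`. -/
theorem pow_dvd_det_of_le_finrank_ker (d k : ℕ) (A : Matrix (Fin d) (Fin d) (Polynomial ℂ))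
    (t₀ : ℂ)
    (hk : k ≤ Module.finrank ℂ
      (LinearMap.ker (Matrix.toLin' (A.map (Polynomial.eval t₀))))) :
    (Polynomial.X - Polynomial.C t₀) ^ k ∣ A.det := by
  obtain ⟨v, hv⟩ := exists_linearIndependent_of_le_finrank hk
  obtain ⟨b, c, hbc⟩ := (hv.map' _ (LinearMap.ker _).ker_subtype).exists_basis_comp_eq
    (Module.finrank_fintype_fun_eq_card ℂ)
  set P := (Pi.basisFun ℂ (Fin d)).toMatrix b
  have hP : IsUnit P.det :=
    have := (Pi.basisFun ℂ (Fin d)).invertibleToMatrix b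
    isUnit_det_of_invertible P
  have hker : ∀ j, A.map (eval t₀) *ᵥ Pᵀ (c j) = 0 := fun j => by
    have : Pᵀ (c j) = v j := by
      ext i
      simp [P, Module.Basis.toMatrix_apply, hbc]
    rw [this, ← toLin'_apply]
    exact (v j).property
  have hdvd : ∀ i j, X - C t₀ ∣ (A * P.map C) i (c j) := fun i j => by
    rw [dvd_iff_isRoot, IsRoot]
    simpa [mul_apply, mulVec, dotProduct, eval_finsetSum] using congrFun (hker j) i
  have hdet := (A * P.map C).pow_card_dvd_det_of_dvd_cols _ c hdvd
  rwa [Fintype.card_fin, det_mul, ← RingHom.mapMatrix_apply, ← RingHom.map_det,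
    (hP.map C).dvd_mul_right] at hdet
end

section
/- Let d be a natural number, A a d × d matrix with entries in ℂ[t], and t₀ ∈ ℂ. If det A vanishes to first order at t₀ (i.e. (t − t₀) divides det A in ℂ[t] but (t − t₀)² does not), then the kernel of the evaluated matrix A(t₀) is exactly one-dimensional as a ℂ-vector space. -/
/-!
Evaluating at `t₀` is a ring map, so a basis change `Q` over `ℂ` whose first `k` columns span
`ker A(t₀)` makes `k` columns of `A * Q` vanish at `t₀`. Each of those columns is divisible by
`t - t₀`, so `(t - t₀)^k ∣ det (A * Q)`, which is `det A` up to a unit. Hence the order of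
vanishing of `det A` at `t₀` bounds `dim ker A(t₀)`, while `det A(t₀) = 0` forces the kernel to be
nonzero.
-/

open Polynomial Module LinearMap

theorem Module.Basis.sumExtend_inl {ι K V : Type*} [DivisionRing K] [AddCommGroup V] [Module K V]
    {v : ι → V} (hv : LinearIndependent K v) (m : ι) : Basis.sumExtend hv (Sum.inl m) = v m := by
  simp only [Basis.sumExtend, Basis.reindex_apply, Basis.extend_apply_self]
  rfl

namespace Matrix

variable {n : Type*} [Fintype n] [DecidableEq n]

theorem pow_card_dvd_det_of_dvd_cols_s17 {R : Type*} [CommRing R] (M : Matrix n n R) (p : R)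
    (s : Finset n) (hs : ∀ i, ∀ j ∈ s, p ∣ M i j) : p ^ s.card ∣ M.det := by
  choose! N hN using hs
  have hfactor : M = of (fun i j => if j ∈ s then N i j else M i j) *
      diagonal (fun j => if j ∈ s then p else 1) := by
    ext i j
    by_cases hj : j ∈ s <;> simp [mul_diagonal, hj, hN i j, mul_comm]
  rw [hfactor, det_mul, det_diagonal, Finset.prod_ite_mem, Finset.univ_inter, Finset.prod_const]
  exact dvd_mul_left _ _

theorem exists_isUnit_det_transpose_apply_eq {K ι : Type*} [Field K] {v : ι → n → K}
    (hv : LinearIndependent K v) :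
    ∃ (Q : Matrix n n K) (f : ι ↪ n), IsUnit Q.det ∧ ∀ m, Qᵀ (f m) = v m := by
  let bE := Basis.sumExtend hv
  let e := bE.indexEquiv (Pi.basisFun K n)
  refine ⟨(Pi.basisFun K n).toMatrix (bE.reindex e), Function.Embedding.inl.trans e.toEmbedding,
    ?_, fun m => ?_⟩
  · rw [← Basis.det_apply]
    exact (Pi.basisFun K n).isUnit_det _
  · ext i
    simp [Basis.toMatrix_apply, Basis.sumExtend_inl, bE]

end Matrix

open Matrix in
theorem pow_finrank_ker_eval_dvd_det {K n : Type*} [Field K] [Fintype n] [DecidableEq n]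
    (A : Matrix n n K[X]) (a : K) :
    (X - C a) ^ finrank K (ker (toLin' (A.map (eval a)))) ∣ A.det := by
  set W := ker (toLin' (A.map (eval a)))
  let b := finBasis K W
  obtain ⟨Q, f, hQ, hQf⟩ :=
    exists_isUnit_det_transpose_apply_eq (b.linearIndependent.map' W.subtype W.ker_subtype)
  have hcols : ∀ i, ∀ j ∈ Finset.univ.map f, X - C a ∣ (A * Q.map C) i j := by
    intro i j hj
    obtain ⟨m, -, rfl⟩ := Finset.mem_map.mp hj
    have hker : A.map (eval a) *ᵥ (b m : n → K) = 0 := by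
      rw [← toLin'_apply]
      exact mem_ker.mp (b m).2
    have heval : eval a ((A * Q.map C) i (f m)) = (A.map (eval a) *ᵥ Qᵀ (f m)) i := by
      simp [mul_apply, mulVec, dotProduct, eval_finsetSum]
    rw [dvd_iff_isRoot, IsRoot, heval, hQf, Function.comp_apply, Submodule.subtype_apply, hker,
      Pi.zero_apply]
  have hdvd := pow_card_dvd_det_of_dvd_cols_s17 _ _ _ hcols
  rwa [Finset.card_map, Finset.card_univ, Fintype.card_fin, det_mul,
    show (Q.map C).det = C Q.det from (RingHom.map_det C Q).symm,
    (isUnit_C.mpr hQ).dvd_mul_right] at hdvd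

/-- If `det A` vanishes to first order at `t₀` (i.e. `(t − t₀)` divides `det A` but
`(t − t₀)²` does not), then the kernel of the evaluated matrix `A(t₀)` is exactly
one-dimensional. -/
theorem ker_one_dim_of_det_vanishes_first_order (d : ℕ)
    (A : Matrix (Fin d) (Fin d) (Polynomial ℂ)) (t₀ : ℂ)
    (h1 : (Polynomial.X - Polynomial.C t₀) ∣ A.det)
    (h2 : ¬ (Polynomial.X - Polynomial.C t₀) ^ 2 ∣ A.det) :
    Module.finrank ℂ
      (LinearMap.ker (Matrix.toLin' (A.map (Polynomial.eval t₀)))) = 1 := by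
  have hdet : (A.map (eval t₀)).det = 0 := by
    rw [← coe_evalRingHom, ← RingHom.mapMatrix_apply, ← RingHom.map_det]
    exact dvd_iff_isRoot.mp h1
  have hpos : 1 ≤ finrank ℂ (ker (Matrix.toLin' (A.map (eval t₀)))) :=
    Submodule.one_le_finrank_iff.mpr
      (det_eq_zero_iff_ker_ne_bot.mp (by rwa [LinearMap.det_toLin']))
  have hle : finrank ℂ (ker (Matrix.toLin' (A.map (eval t₀)))) ≤ 1 := by
    by_contra hgt
    exact h2 ((pow_dvd_pow _ (by omega)).trans (pow_finrank_ker_eval_dvd_det A t₀))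
  omega
end

section
/- For a natural number N, let P(N) be the (finite) set of pairs (μ, S) where μ is a multiset of positive even integers and S is a finite set of positive odd integers such that the sum of μ plus the sum of S equals N, and let d(N) be the cardinality of P(N). Then for every natural number N: ∑_{(μ,S)∈P(N)} (card μ + card S) = ∑_{(p,q)} d(N − pq), where the right-hand sum runs over all pairs of positive integers (p, q) with p ≡ q (mod 2) and pq ≤ N. (After doubling all parts and levels, this is the identity expressing that the degree in h of the level-n Kac determinant of the Neveu-Schwarz Verma module equals ∑_{0 < pq/2 ≤ n, p ≡ q (mod 2)} d(n − pq/2).) -/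
/-!
Count the pairs `(μ, S)` of `N` by their parts. For an even `k`, removing `j` copies of `k`
matches the pairs with at least `j` copies of `k` in `μ` with the pairs of `N - kj`, so the
multiset parts contribute `∑_{k even, j ≥ 1} d(N - kj)`. For an odd `k`, erasing `k` from `S`
gives `a(t) + a(t - k) = d(t - k)` for the number `a(t)` of pairs of `t` with `k ∈ S`, hence
`a(N) = ∑_{j ≥ 1} (-1)^(j+1) d(N - kj)`. The total then differs from the right-hand side by
`∑_{p,q} (q mod 2 - p mod 2) d(N - pq)`, which vanishes since it is antisymmetric in `(p, q)`.
-/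

open scoped BigOperators

def NSPartitions (N : ℕ) : Set (Multiset ℕ × Finset ℕ) :=
  {x | (∀ i ∈ x.1, 0 < i ∧ Even i) ∧ (∀ i ∈ x.2, 0 < i ∧ Odd i) ∧
    x.1.sum + ∑ i ∈ x.2, i = N}

/-- The dimension of the level-`N/2` subspace of the Neveu-Schwarz Verma module. -/
noncomputable def dNS (N : ℕ) : ℕ := (NSPartitions N).ncard

open Finset

theorem sum_eq_sum_card_filter_le {ι : Type*} (s : Finset ι) (f : ι → ℕ) {B : ℕ}
    (hf : ∀ i ∈ s, f i ≤ B) :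
    ∑ i ∈ s, f i = ∑ j ∈ Icc 1 B, #{i ∈ s | j ≤ f i} := by
  refine (sum_congr rfl fun i hi => ?_).trans
    (sum_card_bipartiteAbove_eq_sum_card_bipartiteBelow (fun i j => j ≤ f i))
  have : bipartiteAbove (fun i j => j ≤ f i) (Icc 1 B) i = Icc 1 (f i) := by
    ext j
    simp only [bipartiteAbove, mem_filter, mem_Icc]
    have := hf i hi
    omega
  rw [this, Nat.card_Icc, Nat.add_sub_cancel]

theorem sum_sum_sub_mul_eq_zero {ι R : Type*} [CommRing R] (s : Finset ι) (a : ι → R)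
    (w : ι → ι → R) (hw : ∀ p q, w p q = w q p) :
    ∑ p ∈ s, ∑ q ∈ s, (a q - a p) * w p q = 0 := by
  simp_rw [sub_mul, sum_sub_distrib]
  rw [sub_eq_zero, sum_comm]
  simp_rw [hw]

theorem NSPartitions_finite (t : ℕ) : (NSPartitions t).Finite := by
  refine ((Set.finite_range fun p : Σ s : Fin (t + 1), Nat.Partition s => p.2.parts).prod
    (range (t + 1)).powerset.finite_toSet).subset ?_
  rintro ⟨μ, S⟩ ⟨hμ, -, hsum : μ.sum + ∑ i ∈ S, i = t⟩
  refine ⟨⟨⟨⟨μ.sum, by omega⟩, ⟨μ, fun hi => (hμ _ hi).1, rfl⟩⟩, rfl⟩, ?_⟩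
  rw [mem_coe, mem_powerset]
  intro i hi
  have : i ≤ ∑ j ∈ S, j := single_le_sum (f := fun j => j) (fun j _ => Nat.zero_le j) hi
  rw [mem_range]
  omega

noncomputable def NSPartitionsFinset (t : ℕ) : Finset (Multiset ℕ × Finset ℕ) :=
  (NSPartitions_finite t).toFinset

theorem mem_NSPartitionsFinset {t : ℕ} {x : Multiset ℕ × Finset ℕ} :
    x ∈ NSPartitionsFinset t ↔ x ∈ NSPartitions t :=
  Set.Finite.mem_toFinset _

theorem dNS_eq_card (t : ℕ) : dNS t = #(NSPartitionsFinset t) :=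
  Set.ncard_eq_toFinset_card _ _

theorem finsum_mem_NSPartitions {M : Type*} [AddCommMonoid M] (t : ℕ)
    (f : Multiset ℕ × Finset ℕ → M) :
    ∑ᶠ x ∈ NSPartitions t, f x = ∑ x ∈ NSPartitionsFinset t, f x :=
  finsum_mem_eq_finite_toFinset_sum _ _

namespace NSPartitions

variable {t : ℕ} {x : Multiset ℕ × Finset ℕ}

theorem le_of_mem_fst (hx : x ∈ NSPartitions t) {i : ℕ} (hi : i ∈ x.1) : i ≤ t :=
  hx.2.2 ▸ (Multiset.le_sum_of_mem hi).trans (Nat.le_add_right _ _)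

theorem le_of_mem_snd (hx : x ∈ NSPartitions t) {i : ℕ} (hi : i ∈ x.2) : i ≤ t :=
  hx.2.2 ▸ (single_le_sum (f := fun i => i) (fun _ _ => Nat.zero_le _) hi).trans
    (Nat.le_add_left _ _)

theorem card_fst_le (hx : x ∈ NSPartitions t) : Multiset.card x.1 ≤ t := by
  have := Multiset.card_nsmul_le_sum (s := x.1) (a := 1) fun i hi => (hx.1 i hi).1
  rw [smul_eq_mul, mul_one] at this
  exact hx.2.2 ▸ this.trans (Nat.le_add_right _ _)

theorem mul_le_of_le_count (hx : x ∈ NSPartitions t) {k j : ℕ} (hj : j ≤ x.1.count k) :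
    k * j ≤ t := by
  obtain ⟨u, hu⟩ := Multiset.le_iff_exists_add.mp (Multiset.le_count_iff_replicate_le.mp hj)
  have hsum := hx.2.2
  rw [hu, Multiset.sum_add, Multiset.sum_replicate, smul_eq_mul] at hsum
  have := Nat.mul_comm j k
  omega

end NSPartitions

-- `d(t - pq)`, guarded so that truncated subtraction never produces a spurious `d(0)`.
noncomputable def kacTerm (t p q : ℕ) : ℕ := if p * q ≤ t then dNS (t - p * q) else 0

theorem kacTerm_zero (t p : ℕ) : kacTerm t p 0 = dNS t := by
  simp [kacTerm]

theorem kacTerm_comm (t p q : ℕ) : kacTerm t p q = kacTerm t q p := by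
  rw [kacTerm, kacTerm, Nat.mul_comm]

theorem kacTerm_add_one {t k : ℕ} (hkt : k ≤ t) (j : ℕ) :
    kacTerm t k (j + 1) = kacTerm (t - k) k j := by
  simp only [kacTerm, Nat.mul_succ]
  congr 1
  · exact propext (by omega)
  · congr 1
    omega

theorem kacTerm_eq_zero {t p q : ℕ} (h : t < p * q) : kacTerm t p q = 0 :=
  if_neg (by omega)

-- Removing `j` copies of the part `k` is a bijection onto the pairs of `t - kj`.
theorem card_filter_le_count_eq_kacTerm {k : ℕ} (hk : Even k) (hk₀ : 0 < k) (t j : ℕ) :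
    #{x ∈ NSPartitionsFinset t | j ≤ x.1.count k} = kacTerm t k j := by
  unfold kacTerm
  split_ifs with hjt
  · rw [dNS_eq_card]
    refine card_nbij' (fun x => (x.1 - Multiset.replicate j k, x.2))
      (fun y => (y.1 + Multiset.replicate j k, y.2)) ?_ ?_ ?_ ?_
    · intro x hx
      rw [mem_coe, mem_filter, mem_NSPartitionsFinset] at hx
      obtain ⟨⟨hμ, hS, hsum⟩, hj⟩ := hx
      obtain ⟨u, hu⟩ := Multiset.le_iff_exists_add.mp (Multiset.le_count_iff_replicate_le.mp hj)
      rw [hu, Multiset.sum_add, Multiset.sum_replicate, smul_eq_mul] at hsum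
      refine mem_NSPartitionsFinset.mpr
        ⟨fun i hi => hμ i (Multiset.mem_of_le tsub_le_self hi), hS, ?_⟩
      simp only [hu, add_tsub_cancel_left]
      have := Nat.mul_comm j k
      omega
    · intro y hy
      rw [mem_coe, mem_NSPartitionsFinset] at hy
      obtain ⟨hμ, hS, hsum⟩ := hy
      rw [mem_coe, mem_filter, mem_NSPartitionsFinset]
      refine ⟨⟨fun i hi => ?_, hS, ?_⟩, ?_⟩
      · rcases Multiset.mem_add.mp hi with hi | hi
        · exact hμ i hi
        · rw [Multiset.eq_of_mem_replicate hi]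
          exact ⟨hk₀, hk⟩
      · simp only [Multiset.sum_add, Multiset.sum_replicate, smul_eq_mul] at hsum ⊢
        have := Nat.mul_comm j k
        omega
      · simp [Multiset.count_add, Multiset.count_replicate_self]
    · intro x hx
      rw [mem_coe, mem_filter] at hx
      exact Prod.ext (tsub_add_cancel_of_le (Multiset.le_count_iff_replicate_le.mp hx.2)) rfl
    · intro y _
      exact Prod.ext (add_tsub_cancel_right _ _) rfl
  · rw [card_eq_zero, filter_eq_empty_iff]
    exact fun x hx hj => hjt (NSPartitions.mul_le_of_le_count (mem_NSPartitionsFinset.mp hx) hj)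

-- Erasing `k` from `S` is a bijection onto the pairs of `t - k` whose `S` avoids `k`.
theorem card_filter_mem_snd_add_card_filter_mem_snd_sub {k t : ℕ} (hk : Odd k)
    (hkt : k ≤ t) :
    #{x ∈ NSPartitionsFinset t | k ∈ x.2} + #{x ∈ NSPartitionsFinset (t - k) | k ∈ x.2} =
      dNS (t - k) := by
  suffices #{x ∈ NSPartitionsFinset t | k ∈ x.2} =
      #{x ∈ NSPartitionsFinset (t - k) | k ∉ x.2} by
    rw [this, add_comm, dNS_eq_card]
    exact card_filter_add_card_filter_not _
  refine card_nbij' (fun x => (x.1, x.2.erase k)) (fun y => (y.1, insert k y.2)) ?_ ?_ ?_ ?_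
  · intro x hx
    rw [mem_coe, mem_filter, mem_NSPartitionsFinset] at hx ⊢
    obtain ⟨⟨hμ, hS, hsum⟩, hkx⟩ := hx
    have := add_sum_erase x.2 (fun i => i) hkx
    exact ⟨⟨hμ, fun i hi => hS i (mem_of_mem_erase hi), by simp only; omega⟩,
      notMem_erase k x.2⟩
  · intro y hy
    rw [mem_coe, mem_filter, mem_NSPartitionsFinset] at hy ⊢
    obtain ⟨⟨hμ, hS, hsum⟩, hky⟩ := hy
    have := sum_insert (f := fun i => i) hky
    refine ⟨⟨hμ, ?_, by simp only; omega⟩, mem_insert_self k y.2⟩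
    simp only [mem_insert, forall_eq_or_imp]
    exact ⟨⟨hk.pos, hk⟩, hS⟩
  · intro x hx
    rw [mem_coe, mem_filter] at hx
    exact Prod.ext rfl (insert_erase hx.2)
  · intro y hy
    rw [mem_coe, mem_filter] at hy
    exact Prod.ext rfl (erase_insert hy.2)

theorem card_filter_mem_snd_eq_zero {k t : ℕ} (hkt : t < k) :
    #{x ∈ NSPartitionsFinset t | k ∈ x.2} = 0 := by
  rw [card_eq_zero, filter_eq_empty_iff]
  intro x hx hk
  have := NSPartitions.le_of_mem_snd (mem_NSPartitionsFinset.mp hx) hk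
  omega

theorem card_filter_mem_snd_eq_alternating_sum {k : ℕ} (hk : Odd k) {t M : ℕ} (htM : t ≤ M) :
    (#{x ∈ NSPartitionsFinset t | k ∈ x.2} : ℤ) =
      ∑ i ∈ range M, (-1) ^ i * (kacTerm t k (i + 1) : ℤ) := by
  have hk₀ := hk.pos
  induction M generalizing t with
  | zero => simp [card_filter_mem_snd_eq_zero (show t < k by omega)]
  | succ M ih =>
    by_cases hkt : k ≤ t
    · have hrec : (#{x ∈ NSPartitionsFinset t | k ∈ x.2} : ℤ) =
          dNS (t - k) - #{x ∈ NSPartitionsFinset (t - k) | k ∈ x.2} := by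
        rw [← card_filter_mem_snd_add_card_filter_mem_snd_sub hk hkt]
        push_cast
        ring
      rw [hrec, ih (by omega), sum_range_succ']
      simp only [kacTerm_add_one hkt, kacTerm_zero, pow_succ, pow_zero, mul_neg_one, neg_mul,
        one_mul, sum_neg_distrib]
      ring
    · have hzero : ∀ i, kacTerm t k (i + 1) = 0 := fun i =>
        kacTerm_eq_zero (lt_of_lt_of_le (not_le.mp hkt) (Nat.le_mul_of_pos_right k i.succ_pos))
      simp [card_filter_mem_snd_eq_zero (not_le.mp hkt), hzero]

theorem sum_count_fst_of_even {p : ℕ} (hp : Even p) (hp₀ : 0 < p) (N : ℕ) :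
    ∑ x ∈ NSPartitionsFinset N, x.1.count p = ∑ q ∈ Icc 1 N, kacTerm N p q := by
  rw [sum_eq_sum_card_filter_le _ _ fun x hx => (Multiset.count_le_card p x.1).trans
    (NSPartitions.card_fst_le (mem_NSPartitionsFinset.mp hx))]
  exact sum_congr rfl fun q _ => card_filter_le_count_eq_kacTerm hp hp₀ N q

theorem sum_card_fst_eq (N : ℕ) :
    ∑ x ∈ NSPartitionsFinset N, Multiset.card x.1 =
      ∑ p ∈ Icc 1 N, ∑ q ∈ Icc 1 N, if Even p then kacTerm N p q else 0 := by
  have hcount : ∀ x ∈ NSPartitionsFinset N,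
      Multiset.card x.1 = ∑ p ∈ Icc 1 N, x.1.count p := fun x hx =>
    have hx := mem_NSPartitionsFinset.mp hx
    (Multiset.sum_count_eq_card fun p hp =>
      mem_Icc.mpr ⟨(hx.1 p hp).1, NSPartitions.le_of_mem_fst hx hp⟩).symm
  rw [sum_congr rfl hcount, sum_comm]
  refine sum_congr rfl fun p hp => ?_
  by_cases heven : Even p
  · simp only [heven, if_true]
    exact sum_count_fst_of_even heven (mem_Icc.mp hp).1 N
  · simp only [heven, if_false, sum_const_zero]
    refine sum_eq_zero fun x hx => Multiset.count_eq_zero.mpr fun hpx => heven ?_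
    exact ((mem_NSPartitionsFinset.mp hx).1 p hpx).2

theorem sum_card_snd_eq (N : ℕ) :
    ((∑ x ∈ NSPartitionsFinset N, x.2.card : ℕ) : ℤ) =
      ∑ p ∈ Icc 1 N, ∑ q ∈ Icc 1 N,
        if Odd p then (-1) ^ (q + 1) * (kacTerm N p q : ℤ) else 0 := by
  have hcard : ∑ x ∈ NSPartitionsFinset N, x.2.card =
      ∑ p ∈ Icc 1 N, #{x ∈ NSPartitionsFinset N | p ∈ x.2} := by
    refine (sum_congr rfl fun x hx => ?_).trans (sum_card_bipartiteAbove_eq_sum_card_bipartiteBelow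
      (fun (x : Multiset ℕ × Finset ℕ) (p : ℕ) => p ∈ x.2))
    have hx := mem_NSPartitionsFinset.mp hx
    congr 1
    ext p
    simp only [bipartiteAbove, mem_filter, mem_Icc, iff_and_self]
    exact fun hp => ⟨(hx.2.1 p hp).1, NSPartitions.le_of_mem_snd hx hp⟩
  rw [hcard]
  push_cast
  refine sum_congr rfl fun p hp => ?_
  by_cases hodd : Odd p
  · simp only [hodd, if_true]
    rw [card_filter_mem_snd_eq_alternating_sum hodd le_rfl, ← Ico_add_one_right_eq_Icc,
      sum_Ico_eq_sum_range, Nat.add_sub_cancel]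
    refine sum_congr rfl fun i _ => ?_
    rw [add_comm 1 i, pow_succ, pow_succ]
    ring
  · simp only [hodd, if_false, sum_const_zero, Nat.cast_eq_zero, card_eq_zero,
      filter_eq_empty_iff]
    exact fun x hx hpx => hodd ((mem_NSPartitionsFinset.mp hx).2.1 p hpx).2

theorem sum_filter_parity_eq_sum_kacTerm (N : ℕ) :
    ∑ x ∈ (Icc 1 N ×ˢ Icc 1 N).filter (fun pq => pq.1 % 2 = pq.2 % 2 ∧ pq.1 * pq.2 ≤ N),
        dNS (N - x.1 * x.2) =
      ∑ p ∈ Icc 1 N, ∑ q ∈ Icc 1 N, if p % 2 = q % 2 then kacTerm N p q else 0 := by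
  rw [sum_filter, sum_product]
  simp only [kacTerm, ite_and]

theorem ite_even_add_ite_odd_eq (p q : ℕ) (w : ℤ) :
    ((if Even p then w else 0) + if Odd p then (-1) ^ (q + 1) * w else 0) =
      (if p % 2 = q % 2 then w else 0) + ((q % 2 : ℕ) - (p % 2 : ℕ) : ℤ) * w := by
  rcases Nat.even_or_odd p with hp | hp <;> rcases Nat.even_or_odd q with hq | hq <;>
    simp [hp, hq, Nat.even_iff.mp, Nat.odd_iff.mp, Nat.not_odd_iff_even.mpr,
      Nat.not_even_iff_odd.mpr, Odd.neg_one_pow, pow_succ]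

/-- Degree identity for the Kac determinant: the total number of parts over all pairs
in `P N` equals `∑ d(N − pq)` over pairs of positive integers `p ≡ q (mod 2)` with
`pq ≤ N`. -/
theorem kac_determinant_degree (N : ℕ) :
    (∑ᶠ x ∈ NSPartitions N, (Multiset.card x.1 + x.2.card)) =
      ∑ x ∈ (Finset.Icc 1 N ×ˢ Finset.Icc 1 N).filter
          (fun pq => pq.1 % 2 = pq.2 % 2 ∧ pq.1 * pq.2 ≤ N),
        dNS (N - x.1 * x.2) := by
  rw [finsum_mem_NSPartitions, ← Nat.cast_inj (R := ℤ), sum_add_distrib, Nat.cast_add,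
    sum_card_fst_eq, sum_card_snd_eq, sum_filter_parity_eq_sum_kacTerm]
  push_cast
  simp_rw [← sum_add_distrib, ite_even_add_ite_odd_eq, sum_add_distrib]
  rw [sum_sum_sub_mul_eq_zero _ _ _ fun p q => by rw [kacTerm_comm], add_zero]
end
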